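/- arXiv:1712.04720 — 5 statements merged into one kernel-verified Lean document; each statement's English description precedes it below -/
import Mathlib

section
/- Let α < 0 < β be real numbers and let (x,y) satisfy α x² + 4β y² + (1/2)(x² + 4y²)² ≤ 0 and (x,y) ≠ (0,0). Then C(x,y) := (x² + 4y²)² + α(3β + 3x² + 4y²) + β(x² + 12y²) < 0. -/
theorem stmt_2 (α β x y : ℝ) (hα : α < 0) (hβ : 0 < β)
    (hV : α * x^2 + 4*β*y^2 + (1/2) * (x^2 + 4*y^2)^2 ≤ 0)
    (hxy : (x, y) ≠ (0, 0)) :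
    (x^2 + 4*y^2)^2 + α * (3*β + 3*x^2 + 4*y^2) + β * (x^2 + 12*y^2) < 0 := by
  have ht : 0 < x^2 + 4*y^2 := by
    rcases (Prod.mk.injEq x y 0 0 ▸ hxy : ¬(x = 0 ∧ y = 0)) with h
    rcases eq_or_ne x 0 with hx | hx
    · have hy : y ≠ 0 := fun hy => h ⟨hx, hy⟩
      positivity
    · positivity
  -- G ≤ 3αβ + (α+β)t where t ≤ -2α
  have hs : 2*(β-α)*(4*y^2) ≤ -2*α*(x^2+4*y^2) - (x^2+4*y^2)^2 := by nlinarith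
  have htb : x^2 + 4*y^2 ≤ -2*α := by nlinarith [sq_nonneg y, ht]
  rcases le_or_gt (α + β) 0 with h | h
  · nlinarith [mul_nonpos_of_nonpos_of_nonneg h ht.le, mul_pos (neg_pos.mpr hα) hβ]
  · nlinarith [mul_le_mul_of_nonneg_left htb h.le, mul_pos (neg_pos.mpr hα) hβ]
end

section
/- Let α < 0 < β with α + β > 0. If (x,y) ≠ (0,0) satisfies α x² + 4β y² + (1/2)(x² + 4y²)² = 0, then x² + 4y² ≤ -2α < -3αβ/(α+β). -/
theorem stmt_3 (α β x y : ℝ) (hα : α < 0) (hβ : 0 < β) (hαβ : 0 < α + β)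
    (hV : α * x^2 + 4*β*y^2 + (1/2) * (x^2 + 4*y^2)^2 = 0)
    (hxy : (x, y) ≠ (0, 0)) :
    x^2 + 4*y^2 ≤ -2*α ∧ -2*α < -3*α*β/(α+β) := by
  have h : x ≠ 0 ∨ y ≠ 0 := by
    by_contra h
    push_neg at h
    exact hxy (by simp [h.1, h.2])
  constructor
  · have hs : 0 < x^2 + 4*y^2 := by
      rcases h with h | h
      · have := sq_nonneg y; positivity
      · have := sq_nonneg x; positivity
    nlinarith [sq_nonneg y, mul_pos hs hs, mul_nonneg (sq_nonneg y) (le_of_lt (sub_pos.mpr (hα.trans hβ)))]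
  · rw [lt_div_iff₀ hαβ]
    nlinarith [mul_pos hβ hαβ]
end

section
/- Let α < 0, β > 0, and V(x,y) = αx² + 4βy² + (1/2)(x²+4y²)². Then T(x,y) := -2V·det Hess V + V_xx V_y² + V_yy V_x² - 2 V_x V_y V_xy equals -16(x²+4y²)²[(x²+4y²)² + α(3β+3x²+4y²) + β(x²+12y²)]. -/
/-! With `r = x² + 4y²`, the partial derivatives of `V` are the polynomials `V_x = 2x(α + r)`,
`V_y = 8y(β + r)`, `V_xx = 2α + 6x² + 8y²`, `V_yy = 8β + 8x² + 96y²`, `V_xy = 16xy`;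
substituting them into `T` leaves a polynomial identity. -/

lemma hasDerivAt_nanobeamPotential_fst (α β y x : ℝ) :
    HasDerivAt (fun t => α*t^2 + 4*β*y^2 + (1/2)*(t^2 + 4*y^2)^2)
      (2*α*x + 2*x*(x^2 + 4*y^2)) x := by
  have hsq := hasDerivAt_pow 2 x
  exact (((hsq.const_mul α).add_const _).add
      (((hsq.add_const _).pow 2).const_mul (1/2))).congr_deriv (by ring)

lemma hasDerivAt_nanobeamPotential_snd (α β x y : ℝ) :
    HasDerivAt (fun t => α*x^2 + 4*β*t^2 + (1/2)*(x^2 + 4*t^2)^2)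
      (8*β*y + 8*y*(x^2 + 4*y^2)) y := by
  have hsq := hasDerivAt_pow 2 y
  exact (((hsq.const_mul (4*β)).const_add _).add
      ((((hsq.const_mul 4).const_add _).pow 2).const_mul (1/2))).congr_deriv (by ring)

lemma hasDerivAt_nanobeamPotential_fst_fst (α y x : ℝ) :
    HasDerivAt (fun t => 2*α*t + 2*t*(t^2 + 4*y^2)) (2*α + 6*x^2 + 8*y^2) x := by
  have ht := hasDerivAt_id' x
  have hsq := hasDerivAt_pow 2 x
  exact ((ht.const_mul (2*α)).add ((ht.const_mul 2).mul (hsq.add_const _))).congr_deriv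
    (by ring)

lemma hasDerivAt_nanobeamPotential_snd_snd (β x y : ℝ) :
    HasDerivAt (fun t => 8*β*t + 8*t*(x^2 + 4*t^2)) (8*β + 8*x^2 + 96*y^2) y := by
  have ht := hasDerivAt_id' y
  have hsq := hasDerivAt_pow 2 y
  exact ((ht.const_mul (8*β)).add
      ((ht.const_mul 8).mul ((hsq.const_mul 4).const_add _))).congr_deriv (by ring)

lemma hasDerivAt_nanobeamPotential_fst_snd (α x y : ℝ) :
    HasDerivAt (fun t => 2*α*x + 2*x*(x^2 + 4*t^2)) (16*x*y) y := by
  have hsq := hasDerivAt_pow 2 y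
  exact ((((hsq.const_mul 4).const_add _).const_mul (2*x)).const_add _).congr_deriv (by ring)

theorem stmt_7_general (α β : ℝ)
    (V Vx Vy Vxx Vyy Vxy : ℝ → ℝ → ℝ)
    (hV : ∀ x y, V x y = α*x^2 + 4*β*y^2 + (1/2)*(x^2 + 4*y^2)^2)
    (hVx : ∀ x y, Vx x y = deriv (fun t => V t y) x)
    (hVy : ∀ x y, Vy x y = deriv (fun t => V x t) y)
    (hVxx : ∀ x y, Vxx x y = deriv (fun t => Vx t y) x)
    (hVyy : ∀ x y, Vyy x y = deriv (fun t => Vy x t) y)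
    (hVxy : ∀ x y, Vxy x y = deriv (fun t => Vx x t) y) :
    ∀ x y : ℝ,
      -2 * V x y * (Vxx x y * Vyy x y - (Vxy x y)^2)
        + Vxx x y * (Vy x y)^2 + Vyy x y * (Vx x y)^2
        - 2 * Vx x y * Vy x y * Vxy x y
      = -16 * (x^2 + 4*y^2)^2 *
          ((x^2 + 4*y^2)^2 + α*(3*β + 3*x^2 + 4*y^2) + β*(x^2 + 12*y^2)) := by
  have hx : ∀ x y, Vx x y = 2*α*x + 2*x*(x^2 + 4*y^2) := fun x y => by
    simp only [hVx, hV]; exact (hasDerivAt_nanobeamPotential_fst α β y x).deriv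
  have hy : ∀ x y, Vy x y = 8*β*y + 8*y*(x^2 + 4*y^2) := fun x y => by
    simp only [hVy, hV]; exact (hasDerivAt_nanobeamPotential_snd α β x y).deriv
  have hxx : ∀ x y, Vxx x y = 2*α + 6*x^2 + 8*y^2 := fun x y => by
    simp only [hVxx, hx]; exact (hasDerivAt_nanobeamPotential_fst_fst α y x).deriv
  have hyy : ∀ x y, Vyy x y = 8*β + 8*x^2 + 96*y^2 := fun x y => by
    simp only [hVyy, hy]; exact (hasDerivAt_nanobeamPotential_snd_snd β x y).deriv
  have hxy : ∀ x y, Vxy x y = 16*x*y := fun x y => by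
    simp only [hVxy, hx]; exact (hasDerivAt_nanobeamPotential_fst_snd α x y).deriv
  intro x y
  rw [hV, hx, hy, hxx, hyy, hxy]
  ring

theorem stmt_7 (α β : ℝ) (hα : α < 0) (hβ : 0 < β)
    (V Vx Vy Vxx Vyy Vxy : ℝ → ℝ → ℝ)
    (hV : ∀ x y, V x y = α*x^2 + 4*β*y^2 + (1/2)*(x^2 + 4*y^2)^2)
    (hVx : ∀ x y, Vx x y = deriv (fun t => V t y) x)
    (hVy : ∀ x y, Vy x y = deriv (fun t => V x t) y)
    (hVxx : ∀ x y, Vxx x y = deriv (fun t => Vx t y) x)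
    (hVyy : ∀ x y, Vyy x y = deriv (fun t => Vy x t) y)
    (hVxy : ∀ x y, Vxy x y = deriv (fun t => Vx x t) y) :
    ∀ x y : ℝ,
      -2 * V x y * (Vxx x y * Vyy x y - (Vxy x y)^2)
        + Vxx x y * (Vy x y)^2 + Vyy x y * (Vx x y)^2
        - 2 * Vx x y * Vy x y * Vxy x y
      = -16 * (x^2 + 4*y^2)^2 *
          ((x^2 + 4*y^2)^2 + α*(3*β + 3*x^2 + 4*y^2) + β*(x^2 + 12*y^2)) :=
  stmt_7_general α β V Vx Vy Vxx Vyy Vxy hV hVx hVy hVxx hVyy hVxy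
end

section
/- Let β, ς be real-analytic functions near I₂^c with β(I₂^c) ≠ 0, let n, m > 0 (each either a positive integer or the reciprocal of one), and let b be real-analytic with b(I₂^c) > 0. Define φ_u(I₂) = (I₂-I₂^c)ⁿ β(I₂) + b(I₂) ln(I₂ - I₂^c) + Λ(I₂) and φ_s(I₂) = (I₂-I₂^c)^m ς(I₂), with Λ real-analytic near I₂^c. Then there exists ε > 0 such that φ_u'(I₂) > φ_s'(I₂) for all I₂ ∈ (I₂^c, I₂^c + ε); in particular φ_u - φ_s is strictly increasing there and, since φ_u → -∞ while φ_s → 0 as I₂ → (I₂^c)⁺, the graphs of φ_u and φ_s (as curves θ = φ(I₂) with θ taken mod 2π) intersect transversely at infinitely many points accumulating at I₂ = I₂^c. -/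
/-!
Write `x = I₂ - I₂c`. The Euler derivative `x φ'` of each term has a limit as `x → 0⁺`:
`x ^ p g` contributes `0` for `p > 0` and `g` of class `C¹`, a `C¹` term contributes `0`, and
`b log x` contributes `b(I₂c) > 0`. Hence `x (φu' - φs') → b(I₂c) > 0`, so `φu' > φs'` near
`I₂c`. Since `φu - φs → -∞` and is continuous there, the intermediate value theorem makes it
hit every multiple of `2π` below its value at any point, giving crossings arbitrarily close to
`I₂c`.
-/

open Filter Topology Set Real

theorem ContDiffAt.continuousAt_deriv {f : ℝ → ℝ} {c : ℝ} (hf : ContDiffAt ℝ 1 f c) :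
    ContinuousAt (deriv f) c :=
  (hf.continuousAt_fderiv one_ne_zero).clm_apply continuousAt_const

lemma pos_of_eq_natCast_or_inv {x : ℝ} (h : ∃ k : ℕ, 0 < k ∧ (x = k ∨ x = 1 / (k : ℝ))) :
    0 < x := by
  obtain ⟨k, hk, rfl | rfl⟩ := h <;> positivity

lemma exists_two_pi_mul_int_le (t : ℝ) : ∃ s ∈ range (fun k : ℤ => 2 * π * k), s ≤ t := by
  obtain ⟨k, hk⟩ := exists_int_lt (t / (2 * π))
  refine ⟨_, ⟨k, rfl⟩, ?_⟩
  rw [lt_div_iff₀ (by positivity), mul_comm] at hk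
  exact hk.le

lemma strictMonoOn_sub_of_deriv_lt {f g : ℝ → ℝ} {a b : ℝ}
    (h : ∀ y ∈ Ioo a b, DifferentiableAt ℝ f y ∧ DifferentiableAt ℝ g y ∧ deriv g y < deriv f y) :
    StrictMonoOn (fun y => f y - g y) (Ioo a b) := by
  refine strictMonoOn_of_deriv_pos (convex_Ioo a b) (fun y hy => ?_) (fun y hy => ?_)
  · obtain ⟨hf, hg, -⟩ := h y hy
    exact (hf.sub hg).continuousAt.continuousWithinAt
  · rw [interior_Ioo] at hy
    obtain ⟨hf, hg, hlt⟩ := h y hy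
    rw [deriv_fun_sub hf hg]
    exact sub_pos.2 hlt

section

variable {c : ℝ} {f g : ℝ → ℝ}

lemma tendsto_sub_nhdsGT_zero : Tendsto (fun y => y - c) (𝓝[>] c) (𝓝[>] 0) := by
  refine tendsto_nhdsWithin_of_tendsto_nhds_of_eventually_within _ ?_ ?_
  · simpa using ((continuous_sub_right c).tendsto c).mono_left nhdsWithin_le_nhds
  · filter_upwards [self_mem_nhdsWithin] with y (hy : c < y) using sub_pos.2 hy

lemma tendsto_rpow_sub_nhdsGT {p : ℝ} (hp : 0 < p) :
    Tendsto (fun y => (y - c) ^ p) (𝓝[>] c) (𝓝 0) := by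
  have h := (continuousAt_rpow_const 0 p (Or.inr hp.le)).tendsto
  rw [zero_rpow hp.ne'] at h
  exact h.comp (tendsto_sub_nhdsGT_zero.mono_right nhdsWithin_le_nhds)

lemma tendsto_rpow_sub_mul_nhdsGT {p : ℝ} (hp : 0 < p) (hg : ContinuousAt g c) :
    Tendsto (fun y => (y - c) ^ p * g y) (𝓝[>] c) (𝓝 0) := by
  simpa using (tendsto_rpow_sub_nhdsGT hp).mul (hg.tendsto.mono_left nhdsWithin_le_nhds)

lemma tendsto_mul_log_sub_atBot (hg : ContinuousAt g c) (hgc : 0 < g c) :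
    Tendsto (fun y => g y * log (y - c)) (𝓝[>] c) atBot :=
  (hg.tendsto.mono_left nhdsWithin_le_nhds).pos_mul_atBot hgc
    (tendsto_log_nhdsGT_zero.comp tendsto_sub_nhdsGT_zero)

lemma frequently_mem_of_tendsto_atBot {S : Set ℝ} (hcont : ∀ᶠ y in 𝓝[>] c, ContinuousAt f y)
    (hf : Tendsto f (𝓝[>] c) atBot) (hS : ∀ t, ∃ s ∈ S, s ≤ t) :
    ∃ᶠ y in 𝓝[>] c, f y ∈ S := by
  refine frequently_iff.2 fun {U} hU => ?_
  obtain ⟨u, hcu, hu⟩ := (nhdsGT_basis c).mem_iff.1 (inter_mem hU hcont)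
  obtain ⟨a, ha⟩ : (Ioo c u).Nonempty := nonempty_Ioo.2 hcu
  obtain ⟨s, hsS, hsa⟩ := hS (f a)
  obtain ⟨b, hbs, hb⟩ :=
    ((hf.eventually (eventually_lt_atBot s)).and (Ioo_mem_nhdsGT ha.1)).exists
  have hsub : Icc b a ⊆ Ioo c u := fun y hy => ⟨hb.1.trans_le hy.1, hy.2.trans_lt ha.2⟩
  obtain ⟨x, hx, hfx⟩ := intermediate_value_Icc hb.2.le
    (fun y hy => (hu (hsub hy)).2.continuousWithinAt) ⟨hbs.le, hsa⟩
  exact ⟨x, (hu (hsub hx)).1, hfx ▸ hsS⟩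

lemma tendsto_sub_mul_log_sub : Tendsto (fun y => (y - c) * log (y - c)) (𝓝[>] c) (𝓝 0) := by
  simpa [Function.comp_def] using (continuous_mul_log.tendsto 0).comp
    ((tendsto_sub_nhdsGT_zero (c := c)).mono_right nhdsWithin_le_nhds)

def TendstoEulerDeriv (f : ℝ → ℝ) (c L : ℝ) : Prop :=
  ∃ D : ℝ → ℝ, (∀ᶠ y in 𝓝[>] c, HasDerivAt f (D y) y) ∧
    Tendsto (fun y => (y - c) * D y) (𝓝[>] c) (𝓝 L)

namespace TendstoEulerDeriv

variable {L M : ℝ}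

lemma add (hf : TendstoEulerDeriv f c L) (hg : TendstoEulerDeriv g c M) :
    TendstoEulerDeriv (fun y => f y + g y) c (L + M) := by
  obtain ⟨D, hD, hDL⟩ := hf
  obtain ⟨E, hE, hEM⟩ := hg
  refine ⟨fun y => D y + E y, ?_, ?_⟩
  · filter_upwards [hD, hE] with y hDy hEy using hDy.add hEy
  · simpa only [mul_add] using hDL.add hEM

lemma mul_of_contDiffAt (hf : TendstoEulerDeriv f c L)
    (hf0 : Tendsto (fun y => (y - c) * f y) (𝓝[>] c) (𝓝 0)) (hg : ContDiffAt ℝ 1 g c) :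
    TendstoEulerDeriv (fun y => f y * g y) c (L * g c) := by
  obtain ⟨D, hD, hDL⟩ := hf
  refine ⟨fun y => D y * g y + f y * deriv g y, ?_, ?_⟩
  · filter_upwards [hD, nhdsWithin_le_nhds (hg.eventually (by simp))] with y hDy hgy
    exact hDy.mul (hgy.differentiableAt one_ne_zero).hasDerivAt
  · have h := (hDL.mul (hg.continuousAt.tendsto.mono_left nhdsWithin_le_nhds)).add
      (hf0.mul (hg.continuousAt_deriv.tendsto.mono_left nhdsWithin_le_nhds))
    rw [zero_mul, add_zero] at h
    exact h.congr fun y => by ring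

lemma eventually_deriv_lt (hf : TendstoEulerDeriv f c L) (hg : TendstoEulerDeriv g c M)
    (hML : M < L) :
    ∀ᶠ y in 𝓝[>] c, DifferentiableAt ℝ f y ∧ DifferentiableAt ℝ g y ∧ deriv g y < deriv f y := by
  obtain ⟨D, hD, hDL⟩ := hf
  obtain ⟨E, hE, hEM⟩ := hg
  filter_upwards [hD, hE, hEM.eventually_lt hDL hML, self_mem_nhdsWithin]
    with y hDy hEy hlt (hy : c < y)
  rw [hDy.deriv, hEy.deriv]
  exact ⟨hDy.differentiableAt, hEy.differentiableAt, lt_of_mul_lt_mul_left hlt (sub_pos.2 hy).le⟩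

end TendstoEulerDeriv

lemma ContDiffAt.tendstoEulerDeriv (hf : ContDiffAt ℝ 1 f c) : TendstoEulerDeriv f c 0 := by
  refine ⟨deriv f, ?_, ?_⟩
  · filter_upwards [nhdsWithin_le_nhds (hf.eventually (by simp))] with y hy
    exact (hy.differentiableAt one_ne_zero).hasDerivAt
  · simpa using (tendsto_sub_nhdsGT_zero.mono_right nhdsWithin_le_nhds).mul
      (hf.continuousAt_deriv.tendsto.mono_left nhdsWithin_le_nhds)

lemma tendstoEulerDeriv_rpow_sub {p : ℝ} (hp : 0 < p) :
    TendstoEulerDeriv (fun y => (y - c) ^ p) c 0 := by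
  refine ⟨fun y => p * (y - c) ^ (p - 1), ?_, ?_⟩
  · filter_upwards [self_mem_nhdsWithin] with y (hy : c < y)
    simpa using ((hasDerivAt_id y).sub_const c).rpow_const (Or.inl (sub_pos.2 hy).ne')
  · have h := (tendsto_rpow_sub_nhdsGT hp (c := c)).const_mul p
    rw [mul_zero] at h
    refine h.congr' ?_
    filter_upwards [self_mem_nhdsWithin] with y (hy : c < y)
    rw [rpow_sub_one (sub_pos.2 hy).ne']
    field_simp [(sub_pos.2 hy).ne']

lemma tendstoEulerDeriv_log_sub : TendstoEulerDeriv (fun y => log (y - c)) c 1 := by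
  refine ⟨fun y => (y - c)⁻¹, ?_, ?_⟩
  · filter_upwards [self_mem_nhdsWithin] with y (hy : c < y)
    simpa using ((hasDerivAt_id y).sub_const c).log (sub_pos.2 hy).ne'
  · refine tendsto_const_nhds.congr' ?_
    filter_upwards [self_mem_nhdsWithin] with y (hy : c < y)
    exact (mul_inv_cancel₀ (sub_pos.2 hy).ne').symm

lemma tendstoEulerDeriv_rpow_sub_mul {p : ℝ} (hp : 0 < p) (hg : ContDiffAt ℝ 1 g c) :
    TendstoEulerDeriv (fun y => (y - c) ^ p * g y) c 0 := by
  have hf0 : Tendsto (fun y => (y - c) * (y - c) ^ p) (𝓝[>] c) (𝓝 0) := by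
    simpa using (tendsto_sub_nhdsGT_zero.mono_right nhdsWithin_le_nhds).mul
      (tendsto_rpow_sub_nhdsGT hp)
  simpa using (tendstoEulerDeriv_rpow_sub hp).mul_of_contDiffAt hf0 hg

lemma tendstoEulerDeriv_mul_log_sub (hg : ContDiffAt ℝ 1 g c) :
    TendstoEulerDeriv (fun y => g y * log (y - c)) c (g c) := by
  simpa only [mul_comm, one_mul, mul_one] using
    tendstoEulerDeriv_log_sub.mul_of_contDiffAt tendsto_sub_mul_log_sub hg

end

theorem stmt_14_general (I₂c : ℝ) (β ς b Λ : ℝ → ℝ)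
    (hβ : AnalyticAt ℝ β I₂c)
    (hς : AnalyticAt ℝ ς I₂c)
    (hb : AnalyticAt ℝ b I₂c) (hbpos : 0 < b I₂c)
    (hΛ : AnalyticAt ℝ Λ I₂c)
    (n m : ℝ)
    (hn : ∃ k : ℕ, 0 < k ∧ (n = k ∨ n = 1/(k:ℝ)))
    (hm : ∃ k : ℕ, 0 < k ∧ (m = k ∨ m = 1/(k:ℝ)))
    (φu φs : ℝ → ℝ)
    (hφu : ∀ I₂, φu I₂ = (I₂ - I₂c) ^ n * β I₂ + b I₂ * Real.log (I₂ - I₂c) + Λ I₂)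
    (hφs : ∀ I₂, φs I₂ = (I₂ - I₂c) ^ m * ς I₂) :
    (∃ ε > 0, (∀ I₂ ∈ Ioo I₂c (I₂c + ε), deriv φs I₂ < deriv φu I₂) ∧
      StrictMonoOn (fun I₂ => φu I₂ - φs I₂) (Ioo I₂c (I₂c + ε))) ∧
    Tendsto φu (𝓝[>] I₂c) atBot ∧
    Tendsto φs (𝓝[>] I₂c) (𝓝 0) ∧
    (∀ ε' > 0, ∃ I₂ ∈ Ioo I₂c (I₂c + ε'),
      (∃ k : ℤ, φu I₂ = φs I₂ + 2 * π * k) ∧ deriv φu I₂ ≠ deriv φs I₂) := by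
  have hn0 := pos_of_eq_natCast_or_inv hn
  have hm0 := pos_of_eq_natCast_or_inv hm
  have hu : TendstoEulerDeriv φu I₂c (b I₂c) := by
    rw [funext hφu]
    simpa using ((tendstoEulerDeriv_rpow_sub_mul hn0 hβ.contDiffAt).add
      (tendstoEulerDeriv_mul_log_sub hb.contDiffAt)).add hΛ.contDiffAt.tendstoEulerDeriv
  have hs : TendstoEulerDeriv φs I₂c 0 := by
    rw [funext hφs]
    exact tendstoEulerDeriv_rpow_sub_mul hm0 hς.contDiffAt
  have hderiv := hu.eventually_deriv_lt hs hbpos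
  have hφu_bot : Tendsto φu (𝓝[>] I₂c) atBot := by
    rw [funext hφu]
    exact ((tendsto_rpow_sub_mul_nhdsGT hn0 hβ.continuousAt).add_atBot
      (tendsto_mul_log_sub_atBot hb.continuousAt hbpos)).atBot_add
      (hΛ.continuousAt.tendsto.mono_left nhdsWithin_le_nhds)
  have hφs_zero : Tendsto φs (𝓝[>] I₂c) (𝓝 0) := by
    rw [funext hφs]
    exact tendsto_rpow_sub_mul_nhdsGT hm0 hς.continuousAt
  have hcross : ∃ᶠ y in 𝓝[>] I₂c, φu y - φs y ∈ range (fun k : ℤ => 2 * π * k) :=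
    frequently_mem_of_tendsto_atBot (hderiv.mono fun y hy => (hy.1.sub hy.2.1).continuousAt)
      (by simpa only [sub_eq_add_neg] using hφu_bot.atBot_add hφs_zero.neg)
      exists_two_pi_mul_int_le
  obtain ⟨u, hcu, hIoo⟩ := (nhdsGT_basis I₂c).eventually_iff.1 hderiv
  refine ⟨⟨u - I₂c, sub_pos.2 hcu, ?_⟩, hφu_bot, hφs_zero, fun ε hε => ?_⟩
  · rw [add_sub_cancel]
    exact ⟨fun y hy => (hIoo hy).2.2, strictMonoOn_sub_of_deriv_lt hIoo⟩
  · obtain ⟨y, ⟨⟨k, hk⟩, hgy⟩, hy⟩ :=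
      ((hcross.and_eventually hderiv).and_eventually
        (Ioo_mem_nhdsGT (lt_add_of_pos_right _ hε))).exists
    exact ⟨y, hy, ⟨k, by linarith⟩, hgy.2.2.ne'⟩

theorem stmt_14 (I₂c : ℝ) (β ς b Λ : ℝ → ℝ)
    (hβ : AnalyticAt ℝ β I₂c) (hβ0 : β I₂c ≠ 0)
    (hς : AnalyticAt ℝ ς I₂c)
    (hb : AnalyticAt ℝ b I₂c) (hbpos : 0 < b I₂c)
    (hΛ : AnalyticAt ℝ Λ I₂c)
    (n m : ℝ)
    (hn : ∃ k : ℕ, 0 < k ∧ (n = k ∨ n = 1/(k:ℝ)))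
    (hm : ∃ k : ℕ, 0 < k ∧ (m = k ∨ m = 1/(k:ℝ)))
    (φu φs : ℝ → ℝ)
    (hφu : ∀ I₂, φu I₂ = (I₂ - I₂c) ^ n * β I₂ + b I₂ * Real.log (I₂ - I₂c) + Λ I₂)
    (hφs : ∀ I₂, φs I₂ = (I₂ - I₂c) ^ m * ς I₂) :
    (∃ ε > 0, (∀ I₂ ∈ Ioo I₂c (I₂c + ε), deriv φs I₂ < deriv φu I₂) ∧
      StrictMonoOn (fun I₂ => φu I₂ - φs I₂) (Ioo I₂c (I₂c + ε))) ∧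
    Tendsto φu (𝓝[>] I₂c) atBot ∧
    Tendsto φs (𝓝[>] I₂c) (𝓝 0) ∧
    (∀ ε' > 0, ∃ I₂ ∈ Ioo I₂c (I₂c + ε'),
      (∃ k : ℤ, φu I₂ = φs I₂ + 2 * π * k) ∧ deriv φu I₂ ≠ deriv φs I₂) :=
  stmt_14_general I₂c β ς b Λ hβ hς hb hbpos hΛ n m hn hm φu φs hφu hφs
end

section
/- Let X and Y be real-analytic functions on ℝ × (-ε, ε), 2π-periodic in x, such that g(x,y) = (X(x,y), Y(x,y)) is area-preserving (Jacobian determinant identically 1) and Y(x,0) = 0 for all x. Then Y(x,y) = y·H₂(x,y) for a real-analytic function H₂ that is 2π-periodic in x, and H₂(x,0) > 0 for all x provided ∂_y Y(x,0) > 0; moreover if Y(x,y) = y^k H₂(x,y) with H₂(x,0) ≠ 0 for all x, then necessarily k = 1. -/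
/-!
Because `Y` vanishes on `y = 0`, the difference quotient `H₂ x y = dslope (Y x) 0 y` is
real-analytic in both variables. Locally `f z = ∑ pₙ (z, …, z)` with `pₙ (ρ z, …, ρ z) = 0` for
`ρ (x, y) = (x, 0)`; replacing `z` by `ρ z` one slot at a time writes `pₙ₊₁ (z, …, z)` as a sum
of `n + 1` terms, each with one slot equal to `z - ρ z = y • (0, 1)`. Pulling out `y` gives a
power series for `f / y` whose `n`-th coefficient has norm at most `(n + 1) ‖pₙ₊₁‖`, so it still
converges.

Along `y = 0` we have `∂ₓY = 0`, so the Jacobian condition reduces to `∂ₓX · ∂_yY = 1` and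
`∂_yY (x, 0) ≠ 0`, whereas a factor `y ^ k` with `k ≥ 2` would make this derivative vanish.
-/

open Set Real Filter Topology
open scoped ENNReal NNReal

namespace FormalMultilinearSeries

variable {𝕜 E F G : Type*} [NontriviallyNormedField 𝕜] [NormedAddCommGroup E] [NormedSpace 𝕜 E]
  [NormedAddCommGroup F] [NormedSpace 𝕜 F] [NormedAddCommGroup G] [NormedSpace 𝕜 G]

lemma div_two_le_radius_of_norm_le {p : FormalMultilinearSeries 𝕜 E F}
    {q : FormalMultilinearSeries 𝕜 E G} (h : ∀ n, ‖q n‖ ≤ (n + 1) * ‖p (n + 1)‖) :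
    p.radius / 2 ≤ q.radius := by
  refine ENNReal.le_of_forall_pos_nnreal_lt fun r hr0 hr => ?_
  have h2r : ((2 * r : ℝ≥0) : ℝ≥0∞) < p.radius := by
    rw [ENNReal.lt_div_iff_mul_lt (by simp) (by simp), mul_comm] at hr
    exact_mod_cast hr
  obtain ⟨C, -, hC⟩ := p.norm_mul_pow_le_of_lt_radius h2r
  refine q.le_radius_of_bound (C / (2 * r)) fun n => ?_
  have hr2 : (0 : ℝ) < 2 * r := by positivity
  have hn : ((n : ℝ) + 1) ≤ 2 ^ n := by exact_mod_cast Nat.lt_two_pow_self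
  rw [le_div_iff₀ hr2]
  calc ‖q n‖ * (r : ℝ) ^ n * (2 * r) ≤ (n + 1) * ‖p (n + 1)‖ * (r : ℝ) ^ n * (2 * r) := by
        gcongr; exact h n
    _ ≤ 2 ^ n * ‖p (n + 1)‖ * (r : ℝ) ^ n * (2 * r) := by gcongr
    _ = ‖p (n + 1)‖ * ((2 * r : ℝ≥0) : ℝ) ^ (n + 1) := by push_cast; ring
    _ ≤ C := hC (n + 1)

end FormalMultilinearSeries

section DivSnd

variable {𝕜 E F : Type*} [NontriviallyNormedField 𝕜] [NormedAddCommGroup E] [NormedSpace 𝕜 E]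
  [NormedAddCommGroup F] [NormedSpace 𝕜 F]

variable (𝕜 E) in
noncomputable def inlFst : (E × 𝕜) →L[𝕜] E × 𝕜 :=
  (ContinuousLinearMap.inl 𝕜 E 𝕜).comp (ContinuousLinearMap.fst 𝕜 E 𝕜)

lemma norm_inlFst_le : ‖inlFst 𝕜 E‖ ≤ 1 :=
  ContinuousLinearMap.opNorm_le_bound _ zero_le_one fun z => by
    simp [inlFst, Prod.norm_def]

noncomputable def divSndTerm (p : FormalMultilinearSeries 𝕜 (E × 𝕜) F) (n : ℕ) (i : Fin (n + 1)) :
    ContinuousMultilinearMap 𝕜 (fun _ : Fin n => E × 𝕜) F :=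
  ((p (n + 1)).compContinuousLinearMap
    fun j => if i < j then inlFst 𝕜 E else ContinuousLinearMap.id 𝕜 _).curryMid i (0, 1)

lemma norm_divSndTerm_le (p : FormalMultilinearSeries 𝕜 (E × 𝕜) F) (n : ℕ) (i : Fin (n + 1)) :
    ‖divSndTerm p n i‖ ≤ ‖p (n + 1)‖ := by
  set M := (p (n + 1)).compContinuousLinearMap
    fun j => if i < j then inlFst 𝕜 E else ContinuousLinearMap.id 𝕜 (E × 𝕜)
  have hM : ‖M‖ ≤ ‖p (n + 1)‖ := by
    refine (ContinuousMultilinearMap.norm_compContinuousLinearMap_le _ _).trans ?_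
    refine mul_le_of_le_one_right (norm_nonneg _) (Finset.prod_le_one (fun _ _ => norm_nonneg _) ?_)
    intro j _
    split_ifs
    exacts [norm_inlFst_le, ContinuousLinearMap.norm_id_le]
  calc ‖divSndTerm p n i‖ ≤ ‖M.curryMid i‖ * ‖((0 : E), (1 : 𝕜))‖ := (M.curryMid i).le_opNorm _
    _ = ‖M‖ := by simp [Prod.norm_def, ContinuousMultilinearMap.norm_curryMid]
    _ ≤ ‖p (n + 1)‖ := hM

lemma smul_divSndTerm_apply (p : FormalMultilinearSeries 𝕜 (E × 𝕜) F) (n : ℕ) (i : Fin (n + 1))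
    (z : E × 𝕜) :
    z.2 • divSndTerm p n i (fun _ => z) = p (n + 1)
      (fun j => if j < i then z else if i = j then z - inlFst 𝕜 E z else inlFst 𝕜 E z) := by
  have hz : z - inlFst 𝕜 E z = z.2 • ((0 : E), (1 : 𝕜)) := by ext <;> simp [inlFst]
  have hupdate : (fun j => if j < i then z else if i = j then z - inlFst 𝕜 E z else inlFst 𝕜 E z) =
      Function.update (fun j => if i < j then inlFst 𝕜 E z else z) i
        (z.2 • ((0 : E), (1 : 𝕜))) := by
    funext j
    rcases lt_trichotomy j i with h | rfl | h
    · simp [h, h.ne, h.not_gt]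
    · simp [hz]
    · simp [h, h.ne, h.ne', h.not_gt]
  rw [hupdate, (p (n + 1)).map_update_smul]
  congr 1
  simp only [divSndTerm, ContinuousMultilinearMap.curryMid_apply,
    ContinuousMultilinearMap.compContinuousLinearMap_apply]
  congr 1
  funext j
  rcases lt_trichotomy j i with h | rfl | h
  · simp [h.ne, h.not_gt, Fin.insertNth_apply_below h]
  · simp
  · simp [h, h.ne', Fin.insertNth_apply_above h]

noncomputable def divSndSeries (p : FormalMultilinearSeries 𝕜 (E × 𝕜) F) :
    FormalMultilinearSeries 𝕜 (E × 𝕜) F :=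
  fun n => ∑ i, divSndTerm p n i

lemma norm_divSndSeries_le (p : FormalMultilinearSeries 𝕜 (E × 𝕜) F) (n : ℕ) :
    ‖divSndSeries p n‖ ≤ (n + 1) * ‖p (n + 1)‖ :=
  (norm_sum_le _ _).trans <| by
    simpa using Finset.sum_le_sum fun i (_ : i ∈ Finset.univ) => norm_divSndTerm_le p n i

lemma smul_divSndSeries_apply {p : FormalMultilinearSeries 𝕜 (E × 𝕜) F} {n : ℕ}
    (hp : ∀ w : E, p (n + 1) (fun _ => (w, 0)) = 0) (z : E × 𝕜) :
    z.2 • divSndSeries p n (fun _ => z) = p (n + 1) (fun _ => z) := by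
  have key := (p (n + 1)).toMultilinearMap.map_sub_map_piecewise (fun _ => z)
    (fun _ => inlFst 𝕜 E z) Finset.univ
  simp only [Finset.piecewise_univ, Finset.mem_univ, true_imp_iff] at key
  rw [ContinuousMultilinearMap.coe_coe, show p (n + 1) (fun _ => inlFst 𝕜 E z) = 0 from hp z.1,
    sub_zero] at key
  simp only [divSndSeries, sum_apply, Finset.smul_sum, smul_divSndTerm_apply, key]

theorem HasFPowerSeriesAt.apply_inl_eq_zero {f : E × 𝕜 → F}
    {p : FormalMultilinearSeries 𝕜 (E × 𝕜) F} {a : E} (hp : HasFPowerSeriesAt f p (a, 0))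
    (h0 : ∀ᶠ x in 𝓝 a, f (x, 0) = 0) (n : ℕ) (w : E) :
    p n (fun _ => (w, 0)) = 0 :=
  ((hp.compContinuousLinearMap (u := ContinuousLinearMap.inl 𝕜 E 𝕜) (x := a)).congr
    h0).apply_eq_zero n w

theorem AnalyticAt.exists_eventually_eq_snd_smul [CompleteSpace F] {f : E × 𝕜 → F} {a : E}
    (hf : AnalyticAt 𝕜 f (a, 0)) (h0 : ∀ᶠ x in 𝓝 a, f (x, 0) = 0) :
    ∃ g : E × 𝕜 → F, AnalyticAt 𝕜 g (a, 0) ∧ ∀ᶠ z in 𝓝 (a, 0), f z = z.2 • g z := by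
  obtain ⟨p, hp⟩ := hf
  have hq : 0 < (divSndSeries p).radius :=
    (ENNReal.div_pos hp.radius_pos.ne' (by simp)).trans_le
      (p.div_two_le_radius_of_norm_le (norm_divSndSeries_le p))
  set g := fun z => (divSndSeries p).sum (z - (a, 0))
  have hg : HasFPowerSeriesAt g (divSndSeries p) (a, 0) := by
    simpa using ((divSndSeries p).hasFPowerSeriesOnBall hq).hasFPowerSeriesAt.comp_sub (a, 0)
  refine ⟨g, hg.analyticAt, ?_⟩
  filter_upwards [hp.eventually_hasSum_sub, hg.eventually_hasSum_sub] with z hfz hgz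
  have hp0 : p 0 (fun _ => z - (a, 0)) = 0 := by
    rw [hp.coeff_zero]; exact h0.self_of_nhds
  have hf_succ := (hasSum_nat_add_iff' 1).mpr hfz
  simp only [Finset.range_one, Finset.sum_singleton, hp0, sub_zero] at hf_succ
  refine hf_succ.unique ?_
  convert hgz.const_smul z.2 using 1
  funext n
  have := (smul_divSndSeries_apply (hp.apply_inl_eq_zero h0 (n + 1)) (z - (a, 0))).symm
  rw [Prod.snd_sub] at this
  simpa using this

theorem dslope_same_eq_of_eventuallyEq_sub_smul {g k : 𝕜 → F} {a : 𝕜}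
    (hg : g =ᶠ[𝓝 a] fun t => (t - a) • k t) (hk : DifferentiableAt 𝕜 k a) :
    dslope g a a = k a := by
  have hd : HasDerivAt (fun t => (t - a) • k t) ((a - a) • deriv k a + (1 : 𝕜) • k a) a :=
    ((hasDerivAt_id a).sub_const a).smul hk.hasDerivAt
  rw [dslope_same, hg.deriv_eq, hd.deriv]
  simp

theorem AnalyticOnNhd.dslope_snd [CompleteSpace F] {f : E × 𝕜 → F} {s : Set (E × 𝕜)}
    (hf : AnalyticOnNhd 𝕜 f s) (h0 : ∀ x, f (x, 0) = 0) :
    AnalyticOnNhd 𝕜 (fun z => dslope (fun t => f (z.1, t)) 0 z.2) s := by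
  rintro ⟨x, y⟩ hz
  rcases eq_or_ne y 0 with rfl | hy
  · obtain ⟨g, hg, hfg⟩ := (hf _ hz).exists_eventually_eq_snd_smul (.of_forall h0)
    obtain ⟨U, hU, hUopen, hxU⟩ := eventually_nhds_iff.mp (hfg.and hg.eventually_analyticAt)
    refine hg.congr (Filter.eventually_of_mem (hUopen.mem_nhds hxU) ?_)
    rintro ⟨u, v⟩ huv
    rcases eq_or_ne v 0 with rfl | hv
    · refine (dslope_same_eq_of_eventuallyEq_sub_smul ?_
        (hU _ huv).2.curry_right.differentiableAt).symm
      have hslice : ∀ᶠ t in 𝓝 (0 : 𝕜), (u, t) ∈ U :=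
        (continuous_const.prodMk continuous_id).continuousAt.preimage_mem_nhds (hUopen.mem_nhds huv)
      filter_upwards [hslice] with t ht
      simpa using (hU _ ht).1
    · simp [dslope_of_ne _ hv, slope_def_module, (hU _ huv).1, h0, hv]
  · refine ((analyticAt_snd.inv hy).smul (hf _ hz)).congr ?_
    filter_upwards [continuousAt_snd.eventually_ne hy] with w hw
    simp [dslope_of_ne _ hw, slope_def_module, h0]

end DivSnd

theorem deriv_pow_mul_eq_zero_of_two_le {𝕜 : Type*} [NontriviallyNormedField 𝕜] {k : ℕ}
    (hk : 2 ≤ k) {h : 𝕜 → 𝕜} (hh : DifferentiableAt 𝕜 h 0) :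
    deriv (fun t => t ^ k * h t) 0 = 0 := by
  have hd : HasDerivAt (fun t => t ^ k * h t)
      ((k : 𝕜) * 0 ^ (k - 1) * h 0 + 0 ^ k * deriv h 0) 0 :=
    (hasDerivAt_pow k (0 : 𝕜)).mul hh.hasDerivAt
  rw [hd.deriv]
  simp [zero_pow (by omega : k - 1 ≠ 0), zero_pow (by omega : k ≠ 0)]

theorem deriv_snd_ne_zero_of_jacobian_eq_one {X Y : ℝ → ℝ → ℝ} {x : ℝ} (hY0 : ∀ x, Y x 0 = 0)
    (harea : deriv (fun t => X t 0) x * deriv (fun t => Y x t) 0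
      - deriv (fun t => X x t) 0 * deriv (fun t => Y t 0) x = 1) :
    deriv (fun t => Y x t) 0 ≠ 0 := by
  intro h
  simp [h, hY0] at harea

theorem stmt_16_general (ε : ℝ) (hε : 0 < ε) (X Y : ℝ → ℝ → ℝ)
    (hYan : AnalyticOnNhd ℝ (fun p : ℝ × ℝ => Y p.1 p.2) (univ ×ˢ Ioo (-ε) ε))
    (hYper : ∀ x y, Y (x + 2*π) y = Y x y)
    (harea : ∀ x : ℝ, ∀ y ∈ Ioo (-ε) ε,
      deriv (fun t => X t y) x * deriv (fun t => Y x t) y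
        - deriv (fun t => X x t) y * deriv (fun t => Y t y) x = 1)
    (hY0 : ∀ x, Y x 0 = 0) :
    (∃ H₂ : ℝ → ℝ → ℝ,
      AnalyticOnNhd ℝ (fun p : ℝ × ℝ => H₂ p.1 p.2) (univ ×ˢ Ioo (-ε) ε) ∧
      (∀ x y, H₂ (x + 2*π) y = H₂ x y) ∧
      (∀ x : ℝ, ∀ y ∈ Ioo (-ε) ε, Y x y = y * H₂ x y) ∧
      ((∀ x, 0 < deriv (fun t => Y x t) 0) → ∀ x, 0 < H₂ x 0)) ∧
    (∀ k : ℕ, 0 < k → ∀ H₂' : ℝ → ℝ → ℝ,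
      AnalyticOnNhd ℝ (fun p : ℝ × ℝ => H₂' p.1 p.2) (univ ×ˢ Ioo (-ε) ε) →
      (∀ x : ℝ, ∀ y ∈ Ioo (-ε) ε, Y x y = y^k * H₂' x y) →
      (∀ x, H₂' x 0 ≠ 0) → k = 1) := by
  have h0 : (0 : ℝ) ∈ Ioo (-ε) ε := ⟨neg_neg_iff_pos.mpr hε, hε⟩
  refine ⟨⟨fun x y => dslope (fun t => Y x t) 0 y, hYan.dslope_snd hY0,
    fun x y => by simp only [hYper], fun x y _ => ?_, fun hpos x => by simpa using hpos x⟩, ?_⟩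
  · simpa [hY0] using (sub_smul_dslope (fun t => Y x t) 0 y).symm
  · intro k _ H₂' hH₂' hfac _
    by_contra hk1
    have hYfac : (fun t => Y 0 t) =ᶠ[𝓝 0] fun t => t ^ k * H₂' 0 t :=
      Filter.eventually_of_mem (isOpen_Ioo.mem_nhds h0) (hfac 0)
    refine deriv_snd_ne_zero_of_jacobian_eq_one hY0 (harea 0 0 h0) ?_
    rw [hYfac.deriv_eq]
    exact deriv_pow_mul_eq_zero_of_two_le (by omega)
      (hH₂' (0, 0) ⟨mem_univ _, h0⟩).curry_right.differentiableAt

theorem stmt_16 (ε : ℝ) (hε : 0 < ε) (X Y : ℝ → ℝ → ℝ)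
    (hXan : AnalyticOnNhd ℝ (fun p : ℝ × ℝ => X p.1 p.2) (univ ×ˢ Ioo (-ε) ε))
    (hYan : AnalyticOnNhd ℝ (fun p : ℝ × ℝ => Y p.1 p.2) (univ ×ˢ Ioo (-ε) ε))
    (hXper : ∀ x y, X (x + 2*π) y = X x y)
    (hYper : ∀ x y, Y (x + 2*π) y = Y x y)
    (harea : ∀ x : ℝ, ∀ y ∈ Ioo (-ε) ε,
      deriv (fun t => X t y) x * deriv (fun t => Y x t) y
        - deriv (fun t => X x t) y * deriv (fun t => Y t y) x = 1)
    (hY0 : ∀ x, Y x 0 = 0) :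
    (∃ H₂ : ℝ → ℝ → ℝ,
      AnalyticOnNhd ℝ (fun p : ℝ × ℝ => H₂ p.1 p.2) (univ ×ˢ Ioo (-ε) ε) ∧
      (∀ x y, H₂ (x + 2*π) y = H₂ x y) ∧
      (∀ x : ℝ, ∀ y ∈ Ioo (-ε) ε, Y x y = y * H₂ x y) ∧
      ((∀ x, 0 < deriv (fun t => Y x t) 0) → ∀ x, 0 < H₂ x 0)) ∧
    (∀ k : ℕ, 0 < k → ∀ H₂' : ℝ → ℝ → ℝ,
      AnalyticOnNhd ℝ (fun p : ℝ × ℝ => H₂' p.1 p.2) (univ ×ˢ Ioo (-ε) ε) →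
      (∀ x : ℝ, ∀ y ∈ Ioo (-ε) ε, Y x y = y^k * H₂' x y) →
      (∀ x, H₂' x 0 ≠ 0) → k = 1) :=
  stmt_16_general ε hε X Y hYan hYper harea hY0
end
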